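/- Let Y be a real-valued random variable whose law has a density ρ bounded by ‖ρ‖∞, and let A be a normal matrix in ℂ^{n×n}. Then for any 0 < s < 1, the expectation E[‖(Y·I + A)^{-1}‖^s] (operator 2-norm) is at most (2n)^s/(1-s) · ‖ρ‖∞^s. -/

import Mathlib

/-!
For normal `A`, `‖(y + A)⁻¹‖ = (min_λ |y + λ|)⁻¹ ≤ max_λ |y + Re λ|⁻¹`, where `λ` ranges over the
at most `n` eigenvalues of `A`. Cutting `t ^ (-s)` off at a level `T` gives
`‖(y + A)⁻¹‖ ^ s ≤ T ^ (-s) + ∑_λ g (|y + Re λ|)` with `g t = (t ^ (-s) - T ^ (-s))⁺` (`truncRpow s T`), valid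
whenever no `y + Re λ` vanishes, hence almost surely since the law of `Y` has no atoms.
A density bounded by `R` gives `E g (|Y + c|) ≤ R ∫ g (|u|) du = R · 2s/(1-s) · T ^ (1-s)`,
and `T = (2nR)⁻¹` balances the two terms into `(2nR) ^ s / (1 - s)`.
-/

open MeasureTheory Matrix

section CStarAlgebra

variable {𝒜 : Type*} [CStarAlgebra 𝒜]

theorem IsStarNormal.norm_ringInverse_le (a : 𝒜) [IsStarNormal a] {m : ℝ} (hm : 0 < m)
    (h : ∀ z ∈ spectrum ℂ a, m ≤ ‖z‖) : ‖Ring.inverse a‖ ≤ m⁻¹ := by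
  by_cases ha : IsUnit a
  · obtain ⟨u, rfl⟩ := ha
    have hrad : spectralRadius ℂ (↑u⁻¹ : 𝒜) ≤ ENNReal.ofReal m⁻¹ := by
      refine iSup₂_le fun z hz => ?_
      rw [← spectrum.map_inv, Set.mem_inv] at hz
      have hz' : ‖z‖ ≤ m⁻¹ := le_inv_of_le_inv₀ hm (norm_inv z ▸ h _ hz)
      rw [← ENNReal.ofReal_coe_nnreal, coe_nnnorm]
      exact ENNReal.ofReal_le_ofReal hz'
    rw [IsStarNormal.spectralRadius_eq_nnnorm, ← ENNReal.ofReal_coe_nnreal,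
      ENNReal.ofReal_le_ofReal_iff (by positivity), coe_nnnorm] at hrad
    rwa [Ring.inverse_unit]
  · rw [Ring.inverse_non_unit a ha, norm_zero]
    positivity

instance IsStarNormal.algebraMap_add (z : ℂ) (a : 𝒜) [IsStarNormal a] :
    IsStarNormal (algebraMap ℂ 𝒜 z + a) :=
  have : IsStarNormal (algebraMap ℂ 𝒜 z) := ⟨Algebra.commute_algebraMap_right _ _⟩
  (Algebra.commute_algebraMap_left _ _).isStarNormal_add

end CStarAlgebra

noncomputable def truncRpow (s T : ℝ) : ℝ → ℝ :=
  (Set.Ioo 0 T).indicator fun t => t ^ (-s) - T ^ (-s)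

section truncRpow

variable {s T : ℝ}

theorem truncRpow_nonneg (hs : 0 ≤ s) (u : ℝ) : 0 ≤ truncRpow s T u :=
  Set.indicator_nonneg (fun _ ht => sub_nonneg.mpr
    (Real.rpow_le_rpow_of_nonpos ht.1 ht.2.le (neg_nonpos.mpr hs))) u

theorem rpow_neg_le_add_truncRpow (hs : 0 ≤ s) (hT : 0 < T) {u m : ℝ} (hu : 0 < u)
    (hum : u ≤ m) : m ^ (-s) ≤ T ^ (-s) + truncRpow s T u := by
  rcases le_or_gt T m with hTm | hmT
  · calc m ^ (-s) ≤ T ^ (-s) := Real.rpow_le_rpow_of_nonpos hT hTm (neg_nonpos.mpr hs)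
      _ ≤ T ^ (-s) + truncRpow s T u := le_add_of_nonneg_right (truncRpow_nonneg hs u)
  · calc m ^ (-s) ≤ u ^ (-s) := Real.rpow_le_rpow_of_nonpos hu hum (neg_nonpos.mpr hs)
      _ = T ^ (-s) + truncRpow s T u := by
        rw [truncRpow, Set.indicator_of_mem (show u ∈ Set.Ioo 0 T from ⟨hu, hum.trans_lt hmT⟩)]
        ring

theorem integrable_truncRpow (hs : s < 1) (hT : 0 < T) : Integrable (truncRpow s T) := by
  have hrpow : IntegrableOn (fun t : ℝ => t ^ (-s)) (Set.Ioo 0 T) := by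
    have := intervalIntegral.intervalIntegrable_rpow' (a := 0) (b := T) (r := -s) (by linarith)
    rw [intervalIntegrable_iff_integrableOn_Ioc_of_le hT.le] at this
    exact this.mono_set Set.Ioo_subset_Ioc_self
  exact (hrpow.sub (integrableOn_const (by simp))).integrable_indicator measurableSet_Ioo

theorem integral_truncRpow (hs : s < 1) (hT : 0 < T) :
    ∫ u, truncRpow s T u = s / (1 - s) * T ^ (1 - s) := by
  rw [truncRpow, integral_indicator measurableSet_Ioo, ← integral_Ioc_eq_integral_Ioo,
    ← intervalIntegral.integral_of_le hT.le, intervalIntegral.integral_sub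
      (intervalIntegral.intervalIntegrable_rpow' (by linarith)) intervalIntegrable_const,
    integral_rpow (Or.inl (by linarith)), intervalIntegral.integral_const,
    Real.zero_rpow (by linarith), smul_eq_mul, show -s + 1 = 1 - s by ring,
    show (1 : ℝ) - s = 1 + -s by ring, Real.rpow_add hT, Real.rpow_one]
  have : 1 + -s ≠ 0 := by linarith
  field_simp
  ring

theorem truncRpow_abs (u : ℝ) : truncRpow s T |u| = truncRpow s T u + truncRpow s T (-u) := by
  rcases lt_trichotomy u 0 with hu | rfl | hu
  · rw [abs_of_neg hu, truncRpow,
      Set.indicator_of_notMem (show u ∉ Set.Ioo 0 T from fun h => lt_asymm hu h.1), zero_add]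
  · simp [truncRpow]
  · rw [abs_of_pos hu, truncRpow, Set.indicator_of_notMem
      (show -u ∉ Set.Ioo 0 T from fun h => lt_asymm (neg_neg_of_pos hu) h.1), add_zero]

theorem integrable_truncRpow_abs (hs : s < 1) (hT : 0 < T) :
    Integrable fun u => truncRpow s T |u| := by
  simp_rw [truncRpow_abs]
  exact (integrable_truncRpow hs hT).add (integrable_truncRpow hs hT).comp_neg

theorem integral_truncRpow_abs (hs : s < 1) (hT : 0 < T) :
    ∫ u, truncRpow s T |u| = 2 * s / (1 - s) * T ^ (1 - s) := by
  simp_rw [truncRpow_abs]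
  rw [integral_add (integrable_truncRpow hs hT) (integrable_truncRpow hs hT).comp_neg,
    integral_neg_eq_self, integral_truncRpow hs hT]
  ring

end truncRpow

theorem IsStarNormal.norm_ringInverse_algebraMap_add_rpow_le {𝒜 : Type*} [CStarAlgebra 𝒜]
    (a : 𝒜) [IsStarNormal a] {Λ : Finset ℂ} (hΛ : spectrum ℂ a ⊆ Λ) {s T : ℝ} (hs : 0 ≤ s)
    (hT : 0 < T) {y : ℝ} (hy : ∀ l ∈ Λ, y + l.re ≠ 0) :
    ‖Ring.inverse (algebraMap ℂ 𝒜 y + a)‖ ^ s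
      ≤ T ^ (-s) + ∑ l ∈ Λ, truncRpow s T |y + l.re| := by
  obtain ⟨m, hm, hspec, hmB⟩ : ∃ m, 0 < m ∧ (∀ z ∈ spectrum ℂ (algebraMap ℂ 𝒜 y + a), m ≤ ‖z‖) ∧
      m ^ (-s) ≤ T ^ (-s) + ∑ l ∈ Λ, truncRpow s T |y + l.re| := by
    rcases Λ.eq_empty_or_nonempty with rfl | hΛne
    · refine ⟨T, hT, fun z hz => ?_, by simp⟩
      rw [← spectrum.singleton_add_eq] at hz
      obtain ⟨_, _, l, hl, -⟩ := hz
      simpa using hΛ hl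
    obtain ⟨l₀, hl₀, hmin⟩ := Λ.exists_min_image (fun l => ‖(y : ℂ) + l‖) hΛne
    have hre : 0 < |y + l₀.re| := abs_pos.mpr (hy l₀ hl₀)
    have hre_le : |y + l₀.re| ≤ ‖(y : ℂ) + l₀‖ := by
      simpa using Complex.abs_re_le_norm ((y : ℂ) + l₀)
    refine ⟨‖(y : ℂ) + l₀‖, hre.trans_le hre_le, fun z hz => ?_, ?_⟩
    · rw [← spectrum.singleton_add_eq] at hz
      obtain ⟨_, rfl, l, hl, rfl⟩ := hz
      exact hmin l (hΛ hl)
    · calc ‖(y : ℂ) + l₀‖ ^ (-s) ≤ T ^ (-s) + truncRpow s T |y + l₀.re| :=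
            rpow_neg_le_add_truncRpow hs hT hre hre_le
        _ ≤ T ^ (-s) + ∑ l ∈ Λ, truncRpow s T |y + l.re| := by
          gcongr
          exact Finset.single_le_sum (f := fun l => truncRpow s T |y + l.re|)
            (fun l _ => truncRpow_nonneg hs _) hl₀
  calc ‖Ring.inverse (algebraMap ℂ 𝒜 y + a)‖ ^ s ≤ m⁻¹ ^ s := by
        gcongr
        exact IsStarNormal.norm_ringInverse_le _ hm hspec
    _ = m ^ (-s) := by rw [Real.inv_rpow hm.le, Real.rpow_neg hm.le]
    _ ≤ _ := hmB

theorem MeasureTheory.withDensity_le_smul {α : Type*} [MeasurableSpace α] {μ : Measure α}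
    {f : α → ENNReal} {c : ENNReal} (h : ∀ x, f x ≤ c) : μ.withDensity f ≤ c • μ :=
  withDensity_const (μ := μ) c ▸ withDensity_mono (ae_of_all _ h)

section BoundedDensity

variable {Ω : Type*} [MeasurableSpace Ω] {μ : Measure Ω} {Y : Ω → ℝ} {R : ℝ}

theorem pos_of_map_le_smul_volume [IsProbabilityMeasure μ] (hY : AEMeasurable Y μ)
    (hν : μ.map Y ≤ ENNReal.ofReal R • volume) : 0 < R := by
  by_contra! hR
  have : IsProbabilityMeasure (μ.map Y) := Measure.isProbabilityMeasure_map hY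
  rw [ENNReal.ofReal_of_nonpos hR, zero_smul] at hν
  exact IsProbabilityMeasure.ne_zero _ (le_antisymm hν (Measure.zero_le _))

theorem ae_ne_of_map_le_smul_volume (hY : AEMeasurable Y μ)
    (hν : μ.map Y ≤ ENNReal.ofReal R • volume) (c : ℝ) : ∀ᵐ ω ∂μ, Y ω ≠ c :=
  ae_of_ae_map hY <| (Measure.absolutelyContinuous_of_le_smul hν).ae_le
    (measure_eq_zero_iff_ae_notMem.mp Real.volume_singleton)

theorem integrable_comp_of_map_le_smul_volume (hY : AEMeasurable Y μ)
    (hν : μ.map Y ≤ ENNReal.ofReal R • volume) {f : ℝ → ℝ} (hf : Integrable f) :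
    Integrable (fun ω => f (Y ω)) μ :=
  (integrable_map_measure ((hf.smul_measure ENNReal.ofReal_ne_top).mono_measure hν).1 hY).mp
    ((hf.smul_measure ENNReal.ofReal_ne_top).mono_measure hν)

theorem integral_comp_le_of_map_le_smul_volume (hY : AEMeasurable Y μ) (hR : 0 ≤ R)
    (hν : μ.map Y ≤ ENNReal.ofReal R • volume) {f : ℝ → ℝ} (hf : Integrable f) (hf0 : 0 ≤ f) :
    ∫ ω, f (Y ω) ∂μ ≤ R * ∫ x, f x := by
  have hfR := hf.smul_measure (μ := volume) (ENNReal.ofReal_ne_top (r := R))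
  rw [← integral_map hY (hfR.mono_measure hν).1]
  calc ∫ x, f x ∂μ.map Y ≤ ∫ x, f x ∂(ENNReal.ofReal R • volume) :=
        integral_mono_measure hν (ae_of_all _ hf0) hfR
    _ = R * ∫ x, f x := by rw [integral_smul_measure, ENNReal.toReal_ofReal hR, smul_eq_mul]

theorem integral_truncRpow_abs_comp_add_le (hY : AEMeasurable Y μ) (hR : 0 ≤ R)
    (hν : μ.map Y ≤ ENNReal.ofReal R • volume) {s T : ℝ} (hs0 : 0 ≤ s) (hs1 : s < 1)
    (hT : 0 < T) (c : ℝ) :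
    ∫ ω, truncRpow s T |Y ω + c| ∂μ ≤ R * (2 * s / (1 - s) * T ^ (1 - s)) := by
  calc _ ≤ R * ∫ x, truncRpow s T |x + c| :=
        integral_comp_le_of_map_le_smul_volume hY hR hν
          ((integrable_truncRpow_abs hs1 hT).comp_add_right c) fun _ => truncRpow_nonneg hs0 _
    _ = R * (2 * s / (1 - s) * T ^ (1 - s)) := by
        rw [integral_add_right_eq_self (fun x => truncRpow s T |x|),
          integral_truncRpow_abs hs1 hT]

theorem integral_le_of_ae_le_add_sum_truncRpow [IsProbabilityMeasure μ] (hY : AEMeasurable Y μ)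
    (hR : 0 ≤ R) (hν : μ.map Y ≤ ENNReal.ofReal R • volume) {s T : ℝ} (hs0 : 0 ≤ s)
    (hs1 : s < 1) (hT : 0 < T) {Λ : Finset ℂ} {g : Ω → ℝ} (hg0 : 0 ≤ g)
    (hg : ∀ᵐ ω ∂μ, g ω ≤ T ^ (-s) + ∑ l ∈ Λ, truncRpow s T |Y ω + l.re|) :
    ∫ ω, g ω ∂μ ≤ T ^ (-s) + Λ.card * (R * (2 * s / (1 - s) * T ^ (1 - s))) := by
  have hint (l : ℂ) : Integrable (fun ω => truncRpow s T |Y ω + l.re|) μ :=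
    integrable_comp_of_map_le_smul_volume hY hν
      ((integrable_truncRpow_abs hs1 hT).comp_add_right l.re)
  calc ∫ ω, g ω ∂μ ≤ ∫ ω, (T ^ (-s) + ∑ l ∈ Λ, truncRpow s T |Y ω + l.re|) ∂μ :=
        integral_mono_of_nonneg (ae_of_all _ hg0)
          ((integrable_const _).add (integrable_finsetSum _ fun l _ => hint l)) hg
    _ = T ^ (-s) + ∑ l ∈ Λ, ∫ ω, truncRpow s T |Y ω + l.re| ∂μ := by
        rw [integral_add (integrable_const _) (integrable_finsetSum _ fun l _ => hint l),
          integral_finsetSum _ fun l _ => hint l, integral_const, probReal_univ, one_smul]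
    _ ≤ T ^ (-s) + Λ.card * (R * (2 * s / (1 - s) * T ^ (1 - s))) := by
        rw [← nsmul_eq_mul, ← Finset.sum_const]
        gcongr with l
        exact integral_truncRpow_abs_comp_add_le hY hR hν hs0 hs1 hT l.re

end BoundedDensity

section Matrix

open scoped Matrix.Norms.L2Operator

variable {ι : Type*} [Fintype ι] [DecidableEq ι]

theorem Matrix.spectrum_subset_roots_charpoly (A : Matrix ι ι ℂ) :
    spectrum ℂ A ⊆ A.charpoly.roots.toFinset := fun _ hz =>
  Multiset.mem_toFinset.mpr (Polynomial.mem_roots'.mpr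
    ⟨A.charpoly_monic.ne_zero, Matrix.mem_spectrum_iff_isRoot_charpoly.mp hz⟩)

theorem Matrix.card_roots_charpoly_toFinset_le (A : Matrix ι ι ℂ) :
    A.charpoly.roots.toFinset.card ≤ Fintype.card ι :=
  (Multiset.toFinset_card_le _).trans <|
    (Polynomial.card_roots' _).trans_eq A.charpoly_natDegree_eq_dim

theorem Matrix.norm_toEuclideanCLM_inv_rpow_le {A : Matrix ι ι ℂ} (hA : A * Aᴴ = Aᴴ * A)
    {s T : ℝ} (hs : 0 ≤ s) (hT : 0 < T) {y : ℝ}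
    (hy : ∀ l ∈ A.charpoly.roots.toFinset, y + l.re ≠ 0) :
    ‖Matrix.toEuclideanCLM (𝕜 := ℂ) (((y : ℂ) • (1 : Matrix ι ι ℂ) + A)⁻¹)‖ ^ s
      ≤ T ^ (-s) + ∑ l ∈ A.charpoly.roots.toFinset, truncRpow s T |y + l.re| := by
  have : IsStarNormal A := ⟨hA.symm⟩
  rw [← Matrix.cstar_norm_def, Matrix.nonsing_inv_eq_ringInverse,
    ← Algebra.algebraMap_eq_smul_one]
  exact IsStarNormal.norm_ringInverse_algebraMap_add_rpow_le A
    A.spectrum_subset_roots_charpoly hs hT hy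

end Matrix

theorem stmt_0_general {Ω : Type*} [MeasurableSpace Ω] (μ : Measure Ω) [IsProbabilityMeasure μ]
    (Y : Ω → ℝ) (hY : Measurable Y) (ρ : ℝ → ℝ)
    (hlaw : μ.map Y = volume.withDensity (fun x => ENNReal.ofReal (ρ x)))
    (R : ℝ) (hρR : ∀ x, ρ x ≤ R)
    (n : ℕ) (A : Matrix (Fin n) (Fin n) ℂ) (hA : A * A.conjTranspose = A.conjTranspose * A)
    (s : ℝ) (hs0 : 0 < s) (hs1 : s < 1) :
    ∫ ω, ‖Matrix.toEuclideanCLM (𝕜 := ℂ)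
        (((Y ω : ℂ) • (1 : Matrix (Fin n) (Fin n) ℂ) + A)⁻¹)‖ ^ s ∂μ
      ≤ (2 * n : ℝ) ^ s / (1 - s) * R ^ s := by
  rcases Nat.eq_zero_or_pos n with rfl | hn
  · simp [Subsingleton.elim _ (0 : Matrix (Fin 0) (Fin 0) ℂ), Real.zero_rpow hs0.ne']
  have hν : μ.map Y ≤ ENNReal.ofReal R • volume :=
    hlaw ▸ withDensity_le_smul fun x => ENNReal.ofReal_le_ofReal (hρR x)
  have hR : 0 < R := pos_of_map_le_smul_volume hY.aemeasurable hν
  set Λ := A.charpoly.roots.toFinset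
  set T := (2 * n * R)⁻¹
  have hT : 0 < T := by positivity
  have hreg : ∀ᵐ ω ∂μ, ∀ l ∈ Λ, Y ω + l.re ≠ 0 :=
    (Filter.eventually_all_finset Λ).mpr fun l _ =>
      (ae_ne_of_map_le_smul_volume hY.aemeasurable hν (-l.re)).mono fun ω h => by
        contrapose! h
        linarith
  calc _ ≤ T ^ (-s) + Λ.card * (R * (2 * s / (1 - s) * T ^ (1 - s))) :=
        integral_le_of_ae_le_add_sum_truncRpow hY.aemeasurable hR.le hν hs0.le hs1 hT
          (fun _ => by positivity)
          (hreg.mono fun ω hω => Matrix.norm_toEuclideanCLM_inv_rpow_le hA hs0.le hT hω)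
    _ ≤ T ^ (-s) + n * (R * (2 * s / (1 - s) * T ^ (1 - s))) := by
        gcongr
        exact_mod_cast (Matrix.card_roots_charpoly_toFinset_le A).trans_eq (Fintype.card_fin n)
    _ = (2 * n : ℝ) ^ s / (1 - s) * R ^ s := by
        have hTs : T ^ (-s) = (2 * n : ℝ) ^ s * R ^ s := by
          rw [Real.rpow_neg hT.le, Real.inv_rpow (by positivity), inv_inv,
            Real.mul_rpow (by positivity) hR.le]
        have hT1s : T ^ (1 - s) = T * T ^ (-s) := by
          rw [sub_eq_add_neg, Real.rpow_add hT, Real.rpow_one]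
        have h1s : 1 - s ≠ 0 := by linarith
        simp only [hT1s, hTs, T]
        field_simp
        ring

/-- If `Y` is a real random variable whose law has density `ρ` bounded by `R`,
and `A` is a normal matrix in `ℂ^{n×n}`, then for `0 < s < 1`,
`E[‖(Y·I + A)⁻¹‖^s] ≤ (2n)^s/(1-s) · R^s`, where `‖·‖` is the spectral norm. -/
theorem stmt_0 {Ω : Type*} [MeasurableSpace Ω] (μ : Measure Ω) [IsProbabilityMeasure μ]
    (Y : Ω → ℝ) (hY : Measurable Y) (ρ : ℝ → ℝ) (hρ0 : ∀ x, 0 ≤ ρ x)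
    (hlaw : μ.map Y = volume.withDensity (fun x => ENNReal.ofReal (ρ x)))
    (R : ℝ) (hρR : ∀ x, ρ x ≤ R)
    (n : ℕ) (A : Matrix (Fin n) (Fin n) ℂ) (hA : A * A.conjTranspose = A.conjTranspose * A)
    (s : ℝ) (hs0 : 0 < s) (hs1 : s < 1) :
    ∫ ω, ‖Matrix.toEuclideanCLM (𝕜 := ℂ)
        (((Y ω : ℂ) • (1 : Matrix (Fin n) (Fin n) ℂ) + A)⁻¹)‖ ^ s ∂μ
      ≤ (2 * n : ℝ) ^ s / (1 - s) * R ^ s :=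
  stmt_0_general μ Y hY ρ hlaw R hρR n A hA s hs0 hs1
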